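/- arXiv:2012.07106 — 12 statements merged into one kernel-verified Lean document; each statement's English description precedes it below -/
import Mathlib

section
/- For symmetric positive definite matrices A and B and any matrix X, Γ_{A+B}[X] = Γ_A[X] − Γ_A[B·Γ_{A+B}[X] + Γ_{A+B}[X]·B]. -/
/-!
Both sides solve the same Lyapunov equation `A V + V A = X - (B W + W B)`, so it suffices that
`D ↦ A D + D A` is injective for positive definite `A`. If `A D + D A = 0`, then
`0 = tr (Dᴴ (A D + D A)) = tr (Dᴴ A D) + tr (D A Dᴴ)` is a sum of traces of positive semidefinite
matrices, so `Dᴴ A D = 0`, which forces `D = 0` by positive definiteness.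
-/

open Matrix
open scoped ComplexOrder

namespace Matrix

variable {𝕜 m n : Type*} [RCLike 𝕜] [Fintype m] [Fintype n] {A : Matrix n n 𝕜}

theorem PosDef.conjTranspose_mul_mul_same_eq_zero_iff (hA : A.PosDef) {D : Matrix n m 𝕜} :
    Dᴴ * A * D = 0 ↔ D = 0 := by
  refine ⟨fun h ↦ ext_iff_mulVec.mpr fun x ↦ ?_, fun h ↦ by simp [h]⟩
  by_contra hx
  rw [zero_mulVec] at hx
  simpa only [star_mulVec, dotProduct_mulVec, vecMul_vecMul, h, vecMul_zero, zero_dotProduct,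
    lt_self_iff_false] using hA.dotProduct_mulVec_pos hx

theorem PosDef.eq_zero_of_mul_add_mul_eq_zero (hA : A.PosDef) {D : Matrix n n 𝕜}
    (h : A * D + D * A = 0) : D = 0 := by
  have htrace : (Dᴴ * A * D).trace + (D * A * Dᴴ).trace = 0 := by
    rw [trace_mul_comm (D * A), Matrix.mul_assoc, ← trace_add, ← Matrix.mul_add,
      h, Matrix.mul_zero, trace_zero]
  have h₁ := hA.posSemidef.conjTranspose_mul_mul_same D
  have h₂ := hA.posSemidef.mul_mul_conjTranspose_same D
  rw [add_eq_zero_iff_of_nonneg h₁.trace_nonneg h₂.trace_nonneg, h₁.trace_eq_zero_iff] at htrace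
  exact hA.conjTranspose_mul_mul_same_eq_zero_iff.mp htrace.1

theorem PosDef.injective_mul_add_mul (hA : A.PosDef) :
    Function.Injective fun D : Matrix n n 𝕜 ↦ A * D + D * A := fun D₁ D₂ h ↦
  sub_eq_zero.mp <| hA.eq_zero_of_mul_add_mul_eq_zero <| by
    rw [Matrix.mul_sub, Matrix.sub_mul, sub_add_sub_comm]; exact sub_eq_zero.mpr h

end Matrix

theorem sylvester_add_sol_general {n : ℕ} (A B X Y W Z : Matrix (Fin n) (Fin n) ℝ)
    (hA : A.PosDef)
    (hY : A * Y + Y * A = X)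
    (hW : (A + B) * W + W * (A + B) = X)
    (hZ : A * Z + Z * A = B * W + W * B) :
    W = Y - Z :=
  hA.injective_mul_add_mul <| by
    calc A * W + W * A = X - (B * W + W * B) := by rw [← hW]; noncomm_ring
      _ = A * (Y - Z) + (Y - Z) * A := by rw [← hY, ← hZ]; noncomm_ring

/-- `Γ_{A+B}[X] = Γ_A[X] − Γ_A[B·Γ_{A+B}[X] + Γ_{A+B}[X]·B]` for SPD `A`, `B`. -/
theorem sylvester_add_sol {n : ℕ} (A B X Y W Z : Matrix (Fin n) (Fin n) ℝ)
    (hA : A.PosDef) (hB : B.PosDef)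
    (hY : A * Y + Y * A = X)
    (hW : (A + B) * W + W * (A + B) = X)
    (hZ : A * Z + Z * A = B * W + W * B) :
    W = Y - Z :=
  sylvester_add_sol_general A B X Y W Z hA hY hW hZ
end

section
/- Let à be an invertible n×n matrix and A = Ã^T Ã. For any symmetric matrix X, the matrix X̃ = Ã·Γ_A[X] is the unique matrix satisfying X̃^T Ã + Ã^T X̃ = X and Ã^{-1} X̃ = X̃^T Ã^{-T}. -/
/-!
Write `W = Ã Z`. Horizontality says exactly that `Z` is symmetric, and the lift condition then
reads `A Z + Z A = X`. For positive definite `A` the map `D ↦ A D + D A` is injective: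
`tr (Dᴴ (A D + D A)) = tr (Dᴴ A D) + tr (D A Dᴴ)` is a sum of two nonnegative traces, and
`tr (Dᴴ A D) = 0` forces `D = 0`. Hence `Z = Y`, and `Y` is symmetric since `Yᵀ` solves the
same equation.
-/

open Matrix
open scoped ComplexOrder

namespace Matrix.PosDef

variable {𝕜 n m : Type*} [RCLike 𝕜] [Fintype n] [Fintype m] {A : Matrix n n 𝕜}

lemma conjTranspose_mul_mul_same_eq_zero_iff_s5 (hA : A.PosDef) {B : Matrix n m 𝕜} :
    Bᴴ * A * B = 0 ↔ B = 0 := by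
  refine ⟨fun h => ?_, fun h => by simp [h]⟩
  have hBx (x : m → 𝕜) : B *ᵥ x = 0 := by
    by_contra hx
    simpa only [star_mulVec, dotProduct_mulVec, vecMul_vecMul, h, vecMul_zero, zero_dotProduct,
      lt_irrefl] using hA.dotProduct_mulVec_pos hx
  classical
  ext i j
  simpa using congrFun (hBx (Pi.single j 1)) i

lemma eq_zero_of_mul_add_mul_eq_zero_s5 (hA : A.PosDef) {D : Matrix n n 𝕜}
    (h : A * D + D * A = 0) : D = 0 := by
  have hP := hA.posSemidef.conjTranspose_mul_mul_same D
  have hQ := hA.posSemidef.mul_mul_conjTranspose_same D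
  have hsum : (Dᴴ * A * D).trace + (D * A * Dᴴ).trace = 0 := by
    rw [trace_mul_cycle D, ← trace_add, Matrix.mul_assoc, Matrix.mul_assoc, ← Matrix.mul_add, h,
      Matrix.mul_zero, trace_zero]
  have hP0 := (add_eq_zero_iff_of_nonneg hP.trace_nonneg hQ.trace_nonneg).1 hsum |>.1
  exact hA.conjTranspose_mul_mul_same_eq_zero_iff_s5.1 (hP.trace_eq_zero_iff.1 hP0)

lemma mul_add_mul_injective (hA : A.PosDef) : Function.Injective fun D => A * D + D * A := by
  intro D E h
  refine sub_eq_zero.1 (hA.eq_zero_of_mul_add_mul_eq_zero_s5 ?_)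
  rw [Matrix.mul_sub, Matrix.sub_mul]
  exact (add_sub_add_comm ..).symm.trans (sub_eq_zero.2 h)

lemma isHermitian_of_mul_add_mul_eq (hA : A.PosDef) {X Y : Matrix n n 𝕜} (hX : X.IsHermitian)
    (hY : A * Y + Y * A = X) : Y.IsHermitian := by
  refine hA.mul_add_mul_injective ?_
  calc A * Yᴴ + Yᴴ * A = (A * Y + Y * A)ᴴ := by
        rw [conjTranspose_add, conjTranspose_mul, conjTranspose_mul, hA.isHermitian.eq, add_comm]
    _ = A * Y + Y * A := by rw [hY, hX.eq]

end Matrix.PosDef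

/-- For invertible `Ã` with `A = Ãᵀ Ã` and symmetric `X`, the matrix `X̃ = Ã · Γ_A[X]`
is the unique matrix satisfying `X̃ᵀ Ã + Ãᵀ X̃ = X` (lift condition) and
`Ã⁻¹ X̃ = X̃ᵀ Ã⁻ᵀ` (horizontality). -/
theorem horizontal_lift_unique {n : ℕ} (At X Y : Matrix (Fin n) (Fin n) ℝ)
    (hAt : IsUnit At.det)
    (hX : Xᵀ = X)
    (hY : (Atᵀ * At) * Y + Y * (Atᵀ * At) = X) :
    ∀ W : Matrix (Fin n) (Fin n) ℝ,
      (Wᵀ * At + Atᵀ * W = X ∧ At⁻¹ * W = Wᵀ * (At⁻¹)ᵀ) ↔ W = At * Y := by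
  have hA : (Atᵀ * At).PosDef := by
    simpa using PosDef.conjTranspose_mul_self At
      (mulVec_injective_iff_isUnit.2 ((isUnit_iff_isUnit_det At).2 hAt))
  have hYsymm : Yᵀ = Y := hA.isHermitian_of_mul_add_mul_eq hX hY
  intro W
  obtain ⟨Z, rfl⟩ : ∃ Z, W = At * Z := ⟨At⁻¹ * W, (mul_nonsing_inv_cancel_left At W hAt).symm⟩
  have hlift : (At * Z)ᵀ * At + Atᵀ * (At * Z) = Zᵀ * (Atᵀ * At) + (Atᵀ * At) * Z := by
    simp only [transpose_mul, Matrix.mul_assoc]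
  have hhor : (At * Z)ᵀ * (At⁻¹)ᵀ = Zᵀ := by
    rw [transpose_mul, Matrix.mul_assoc, ← transpose_mul, nonsing_inv_mul _ hAt, transpose_one,
      Matrix.mul_one]
  rw [hlift, hhor, nonsing_inv_mul_cancel_left At Z hAt,
    ((isUnit_iff_isUnit_det At).2 hAt).mul_right_inj]
  constructor
  · rintro ⟨hZlift, hZ⟩
    rw [← hZ] at hZlift
    exact hA.mul_add_mul_injective (by dsimp only; rw [hY, ← hZlift, add_comm])
  · rintro rfl
    exact ⟨by rw [hYsymm, add_comm, hY], hYsymm.symm⟩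
end

section
/- For symmetric positive definite matrices A₁ and A₂, the matrix P = A₁^{-1/2}·(A₁A₂)^{1/2}·A₂^{-1/2} is orthogonal, i.e., P^T P = I. -/
open Matrix

/-- For SPD `A₁, A₂`, the matrix `P = A₁^{-1/2}·(A₁A₂)^{1/2}·A₂^{-1/2}` is orthogonal.
Here `S1, S2` are the positive definite square roots of `A₁, A₂`, `N` is the positive
definite square root of `S1·A₂·S1`, and `(A₁A₂)^{1/2} = S1·N·S1⁻¹`. -/
theorem wasserstein_orthogonal_P {n : ℕ} (A₁ A₂ S1 S2 N : Matrix (Fin n) (Fin n) ℝ)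
    (hA₁ : A₁.PosDef) (hA₂ : A₂.PosDef)
    (hS1 : S1.PosDef) (hS1sq : S1 * S1 = A₁)
    (hS2 : S2.PosDef) (hS2sq : S2 * S2 = A₂)
    (hN : N.PosDef) (hNsq : N * N = S1 * A₂ * S1) :
    (S1⁻¹ * (S1 * N * S1⁻¹) * S2⁻¹)ᵀ * (S1⁻¹ * (S1 * N * S1⁻¹) * S2⁻¹) = 1 := by
  have h1 : IsUnit S1.det := isUnit_iff_ne_zero.mpr hS1.det_pos.ne'
  have h2 : IsUnit S2.det := isUnit_iff_ne_zero.mpr hS2.det_pos.ne'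
  have hS1t : S1ᵀ = S1 := hS1.isHermitian.eq
  have hS2t : S2ᵀ = S2 := hS2.isHermitian.eq
  have hNt : Nᵀ = N := hN.isHermitian.eq
  have key : (S1⁻¹ * (S1 * N * S1⁻¹) * S2⁻¹) = N * S1⁻¹ * S2⁻¹ := by
    rw [show S1⁻¹ * (S1 * N * S1⁻¹) = (S1⁻¹ * S1) * N * S1⁻¹ by noncomm_ring [Matrix.mul_assoc],
      Matrix.nonsing_inv_mul _ h1, Matrix.one_mul]
  rw [key, Matrix.transpose_mul, Matrix.transpose_mul, Matrix.transpose_nonsing_inv,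
    Matrix.transpose_nonsing_inv, hS1t, hS2t, hNt]
  have hNN : N * N = S1 * (S2 * S2) * S1 := by rw [hNsq, hS2sq]
  calc S2⁻¹ * (S1⁻¹ * N) * (N * S1⁻¹ * S2⁻¹)
      = S2⁻¹ * S1⁻¹ * (N * N) * S1⁻¹ * S2⁻¹ := by noncomm_ring [Matrix.mul_assoc]
    _ = S2⁻¹ * S1⁻¹ * (S1 * (S2 * S2) * S1) * S1⁻¹ * S2⁻¹ := by rw [hNN]
    _ = S2⁻¹ * ((S1⁻¹ * S1) * S2 * (S2 * ((S1 * S1⁻¹) * S2⁻¹))) := by noncomm_ring [Matrix.mul_assoc]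
    _ = 1 := by
        rw [Matrix.nonsing_inv_mul _ h1, Matrix.mul_nonsing_inv _ h1, Matrix.one_mul,
          Matrix.one_mul, Matrix.mul_nonsing_inv _ h2, Matrix.mul_one, Matrix.nonsing_inv_mul _ h2]
end

section
/- For symmetric positive definite A₁, A₂, the matrix A₁^{-1}·(A₁A₂)^{1/2} is symmetric; equivalently A₁^{-1}(A₁A₂)^{1/2} = (A₂A₁)^{1/2}·A₁^{-1}. -/
open Matrix

/-- For SPD `A₁, A₂`, the matrix `A₁⁻¹·(A₁A₂)^{1/2}` is symmetric; equivalently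
`A₁⁻¹(A₁A₂)^{1/2} = (A₂A₁)^{1/2}·A₁⁻¹`, where `(A₂A₁)^{1/2} = ((A₁A₂)^{1/2})ᵀ`.
Here `S1` is the positive definite square root of `A₁`, `N` that of `S1·A₂·S1`,
and `(A₁A₂)^{1/2} = S1·N·S1⁻¹`. -/
theorem inv_mul_sqrt_symm {n : ℕ} (A₁ A₂ S1 N : Matrix (Fin n) (Fin n) ℝ)
    (hA₁ : A₁.PosDef) (hA₂ : A₂.PosDef)
    (hS1 : S1.PosDef) (hS1sq : S1 * S1 = A₁)
    (hN : N.PosDef) (hNsq : N * N = S1 * A₂ * S1) :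
    (A₁⁻¹ * (S1 * N * S1⁻¹))ᵀ = A₁⁻¹ * (S1 * N * S1⁻¹) ∧
    A₁⁻¹ * (S1 * N * S1⁻¹) = (S1 * N * S1⁻¹)ᵀ * A₁⁻¹ := by
  have hSsymm : S1ᵀ = S1 := hS1.isHermitian.eq
  have hNsymm : Nᵀ = N := hN.isHermitian.eq
  have hSdet : IsUnit S1.det := isUnit_iff_ne_zero.mpr hS1.det_pos.ne'
  have hSinv : S1⁻¹ * S1 = 1 := nonsing_inv_mul S1 hSdet
  have hSinv' : S1 * S1⁻¹ = 1 := mul_nonsing_inv S1 hSdet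
  have hA₁inv : A₁⁻¹ = S1⁻¹ * S1⁻¹ := by
    rw [← hS1sq, Matrix.mul_inv_rev]
  have hSinvT : (S1⁻¹)ᵀ = S1⁻¹ := by
    rw [transpose_nonsing_inv, hSsymm]
  have key : A₁⁻¹ * (S1 * N * S1⁻¹) = S1⁻¹ * N * S1⁻¹ := by
    rw [hA₁inv]
    simp only [Matrix.mul_assoc]
    rw [← Matrix.mul_assoc S1⁻¹ S1, hSinv, Matrix.one_mul]
  have keyT : (S1⁻¹ * N * S1⁻¹)ᵀ = S1⁻¹ * N * S1⁻¹ := by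
    simp [Matrix.transpose_mul, hSinvT, hNsymm, Matrix.mul_assoc]
  refine ⟨by rw [key, keyT], ?_⟩
  rw [key, hA₁inv, Matrix.transpose_mul, Matrix.transpose_mul, hSinvT, hNsymm, hSsymm]
  simp only [Matrix.mul_assoc]
  rw [← Matrix.mul_assoc S1 S1⁻¹, hSinv', Matrix.one_mul]
end

section
/- For symmetric positive definite A₁, A₂ and all t ∈ [0,1], the matrix γ(t) = (1−t)²A₁ + t(1−t)[(A₁A₂)^{1/2} + (A₂A₁)^{1/2}] + t²A₂ is symmetric positive definite. -/
/-!
With `S = A₁^{1/2}` and `N = (S A₂ S)^{1/2}`, the matrix `T = S⁻¹ N S⁻¹` is the Monge map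
transporting `𝒩(0, A₁)` to `𝒩(0, A₂)`: it is positive definite, `A₁ T = (A₁A₂)^{1/2}` and
`T A₁ T = A₂`. Hence `γ(t) = M A₁ M` with `M = (1 - t) I + t T`, a convex combination of
positive definite matrices, and a congruence of `A₁` by the invertible symmetric `M` is
positive definite.
-/

open Matrix

theorem smul_one_add_smul_mul_mul_smul_one_add_smul {R A : Type*} [CommRing R] [Ring A]
    [Algebra R A] (s t : R) (a x : A) :
    (s • 1 + t • x) * a * (s • 1 + t • x)
      = s ^ 2 • a + (t * s) • (a * x + x * a) + t ^ 2 • (x * a * x) := by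
  simp only [add_mul, mul_add, smul_mul_assoc, mul_smul_comm, one_mul, mul_one]
  module

namespace Matrix

variable {m : Type*}

theorem PosDef.transpose_eq {A : Matrix m m ℝ} (hA : A.PosDef) : Aᵀ = A := by
  rw [← conjTranspose_eq_transpose_of_trivial, hA.isHermitian.eq]

theorem convex_posDef : Convex ℝ {A : Matrix m m ℝ | A.PosDef} := by
  intro A hA B hB s t hs ht hst
  rcases ht.eq_or_lt with rfl | ht
  · rw [add_zero] at hst
    simpa [hst] using hA
  · exact PosDef.posSemidef_add (hA.posSemidef.smul hs) (hB.smul ht)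

variable [Fintype m] [DecidableEq m]

/-- The Monge map `A₁^{-1/2} (A₁^{1/2} A₂ A₁^{1/2})^{1/2} A₁^{-1/2}`, written in terms of
`S = A₁^{1/2}` and `N = (S A₂ S)^{1/2}`. -/
noncomputable def transportMap {K : Type*} [CommRing K] (S N : Matrix m m K) : Matrix m m K :=
  S⁻¹ * N * S⁻¹

section CommRing

variable {K : Type*} [CommRing K] {S N : Matrix m m K}

theorem mul_self_mul_transportMap (hS : IsUnit S.det) :
    S * S * transportMap S N = S * N * S⁻¹ := by
  simp only [transportMap, Matrix.mul_assoc, mul_nonsing_inv_cancel_left _ _ hS]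

theorem transportMap_mul_mul_self_mul_transportMap (hS : IsUnit S.det) {B : Matrix m m K}
    (hN : N * N = S * B * S) :
    transportMap S N * (S * S) * transportMap S N = B := by
  calc transportMap S N * (S * S) * transportMap S N
      = S⁻¹ * (N * N) * S⁻¹ := by
        simp only [transportMap, Matrix.mul_assoc, nonsing_inv_mul_cancel_left _ _ hS,
          mul_nonsing_inv_cancel_left _ _ hS]
    _ = B := by
        simp only [hN, Matrix.mul_assoc, nonsing_inv_mul_cancel_left _ _ hS,
          mul_nonsing_inv _ hS, Matrix.mul_one]

end CommRing

theorem PosDef.transportMap {S N : Matrix m m ℝ} (hS : S.PosDef) (hN : N.PosDef) :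
    (transportMap S N).PosDef := by
  have hSinv : star S⁻¹ = S⁻¹ := hS.inv.isHermitian.eq
  simpa only [Matrix.transportMap, hSinv] using
    (IsUnit.posDef_star_left_conjugate_iff hS.inv.isUnit).mpr hN

end Matrix

theorem wasserstein_geodesic_posDef_general {n : ℕ} (A₁ A₂ S1 N : Matrix (Fin n) (Fin n) ℝ)
    (hA₁ : A₁.PosDef)
    (hS1 : S1.PosDef) (hS1sq : S1 * S1 = A₁)
    (hN : N.PosDef) (hNsq : N * N = S1 * A₂ * S1) :
    ∀ t : ℝ, t ∈ Set.Icc (0:ℝ) 1 →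
      ((1 - t)^2 • A₁
        + (t * (1 - t)) • ((S1 * N * S1⁻¹) + (S1 * N * S1⁻¹)ᵀ)
        + t^2 • A₂).PosDef := by
  intro t ⟨ht0, ht1⟩
  have hS1det : IsUnit S1.det := hS1.isUnit.map detMonoidHom
  set T := transportMap S1 N
  have hT : T.PosDef := hS1.transportMap hN
  have hA₁T : S1 * N * S1⁻¹ = A₁ * T := by rw [← hS1sq, mul_self_mul_transportMap hS1det]
  have hA₂ : A₂ = T * A₁ * T := by
    rw [← hS1sq, transportMap_mul_mul_self_mul_transportMap hS1det hNsq]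
  set M := (1 - t) • (1 : Matrix (Fin n) (Fin n) ℝ) + t • T
  have hM : M.PosDef := convex_posDef PosDef.one hT (by linarith) ht0 (by ring)
  have hγ : (1 - t)^2 • A₁ + (t * (1 - t)) • ((S1 * N * S1⁻¹) + (S1 * N * S1⁻¹)ᵀ) + t^2 • A₂
      = Mᴴ * A₁ * M := by
    rw [hM.isHermitian.eq, hA₁T, transpose_mul, hA₁.transpose_eq, hT.transpose_eq, hA₂,
      smul_one_add_smul_mul_mul_smul_one_add_smul]
  rw [hγ]
  exact hA₁.conjTranspose_mul_mul_same (mulVec_injective_of_isUnit hM.isUnit)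

/-- The Wasserstein geodesic
`γ(t) = (1−t)²A₁ + t(1−t)[(A₁A₂)^{1/2} + (A₂A₁)^{1/2}] + t²A₂` stays inside SPD(n)
for all `t ∈ [0,1]`. Here `S1` is the positive definite square root of `A₁`, `N` that
of `S1·A₂·S1`, `(A₁A₂)^{1/2} = S1·N·S1⁻¹` and `(A₂A₁)^{1/2} = ((A₁A₂)^{1/2})ᵀ`. -/
theorem wasserstein_geodesic_posDef {n : ℕ} (A₁ A₂ S1 N : Matrix (Fin n) (Fin n) ℝ)
    (hA₁ : A₁.PosDef) (hA₂ : A₂.PosDef)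
    (hS1 : S1.PosDef) (hS1sq : S1 * S1 = A₁)
    (hN : N.PosDef) (hNsq : N * N = S1 * A₂ * S1) :
    ∀ t : ℝ, t ∈ Set.Icc (0:ℝ) 1 →
      ((1 - t)^2 • A₁
        + (t * (1 - t)) • ((S1 * N * S1⁻¹) + (S1 * N * S1⁻¹)ᵀ)
        + t^2 • A₂).PosDef :=
  wasserstein_geodesic_posDef_general A₁ A₂ S1 N hA₁ hS1 hS1sq hN hNsq
end

section
/- For symmetric positive definite A₁, A₂ and t ∈ [0,1], the line segment l(t) = t·A₁^{-1/2}(A₁A₂)^{1/2} + (1−t)·A₁^{1/2} consists of invertible matrices, i.e., det(l(t)) > 0 for all t ∈ [0,1]. -/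
/-!
Writing `A₁ = S²` with `S = A₁^{1/2}`, both summands of `l(t)` factor through `S⁻¹` on the right:
`l(t) = (t N + (1 - t) A₁) S⁻¹`, where `N = (S A₂ S)^{1/2}`. The first factor is a convex
combination of positive definite matrices, hence positive definite, and `det S⁻¹ > 0`.
-/

open Matrix
open scoped ComplexOrder

namespace Matrix

theorem convex_setOf_posDef {n 𝕜 : Type*} [Fintype n] [RCLike 𝕜] :
    Convex ℝ {A : Matrix n n 𝕜 | A.PosDef} := by
  intro A hA B hB a b ha hb hab
  rcases ha.eq_or_lt with rfl | ha
  · simpa [(zero_add b).symm.trans hab] using hB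
  · exact (PosDef.smul hA ha).add_posSemidef (hB.posSemidef.smul hb)

theorem smul_inv_mul_conj_add_smul_eq {n R : Type*} [Fintype n] [DecidableEq n] [CommRing R]
    {S : Matrix n n R} (hS : IsUnit S.det) (N : Matrix n n R) (a b : R) :
    a • (S⁻¹ * (S * N * S⁻¹)) + b • S = (a • N + b • (S * S)) * S⁻¹ := by
  rw [← Matrix.mul_assoc, nonsing_inv_mul_cancel_left _ _ hS, add_mul, smul_mul, smul_mul,
    mul_nonsing_inv_cancel_right _ _ hS]

end Matrix

theorem lifted_segment_det_pos_general {n : ℕ} (A₁ S1 N : Matrix (Fin n) (Fin n) ℝ)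
    (hA₁ : A₁.PosDef)
    (hS1 : S1.PosDef) (hS1sq : S1 * S1 = A₁)
    (hN : N.PosDef) :
    ∀ t : ℝ, t ∈ Set.Icc (0:ℝ) 1 →
      0 < (t • (S1⁻¹ * (S1 * N * S1⁻¹)) + (1 - t) • S1).det := by
  rintro t ⟨ht0, ht1⟩
  have hS1det : IsUnit S1.det := (isUnit_iff_isUnit_det S1).1 hS1.isUnit
  have hcomb : (t • N + (1 - t) • A₁).PosDef :=
    convex_setOf_posDef hN hA₁ ht0 (sub_nonneg.2 ht1) (add_sub_cancel t 1)
  rw [smul_inv_mul_conj_add_smul_eq hS1det, hS1sq, det_mul]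
  exact mul_pos hcomb.det_pos hS1.inv.det_pos

/-- The lifted segment `l(t) = t·A₁^{-1/2}(A₁A₂)^{1/2} + (1−t)·A₁^{1/2}` is
non-degenerate: `det(l(t)) > 0` for all `t ∈ [0,1]`. Here `S1` is the positive
definite square root of `A₁`, `N` that of `S1·A₂·S1`, and
`(A₁A₂)^{1/2} = S1·N·S1⁻¹`. -/
theorem lifted_segment_det_pos {n : ℕ} (A₁ A₂ S1 N : Matrix (Fin n) (Fin n) ℝ)
    (hA₁ : A₁.PosDef) (hA₂ : A₂.PosDef)
    (hS1 : S1.PosDef) (hS1sq : S1 * S1 = A₁)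
    (hN : N.PosDef) (hNsq : N * N = S1 * A₂ * S1) :
    ∀ t : ℝ, t ∈ Set.Icc (0:ℝ) 1 →
      0 < (t • (S1⁻¹ * (S1 * N * S1⁻¹)) + (1 - t) • S1).det :=
  lifted_segment_det_pos_general A₁ S1 N hA₁ hS1 hS1sq hN
end

section
/- For symmetric positive definite A₁, A₂, the lifted segment l(t) = t·A₁^{-1/2}(A₁A₂)^{1/2} + (1−t)·A₁^{1/2} satisfies l(t)^T l(t) = (1−t)²A₁ + t(1−t)[(A₁A₂)^{1/2} + (A₂A₁)^{1/2}] + t²A₂. -/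
open Matrix

/-- The lifted segment `l(t) = t·A₁^{-1/2}(A₁A₂)^{1/2} + (1−t)·A₁^{1/2}` projects to
the Wasserstein geodesic: `l(t)ᵀ l(t) = (1−t)²A₁ + t(1−t)[(A₁A₂)^{1/2} + (A₂A₁)^{1/2}] + t²A₂`.
Here `S1` is the positive definite square root of `A₁`, `N` that of `S1·A₂·S1`,
`(A₁A₂)^{1/2} = S1·N·S1⁻¹`, `(A₂A₁)^{1/2} = ((A₁A₂)^{1/2})ᵀ`. -/
theorem lifted_segment_projects {n : ℕ} (A₁ A₂ S1 N : Matrix (Fin n) (Fin n) ℝ)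
    (hA₁ : A₁.PosDef) (hA₂ : A₂.PosDef)
    (hS1 : S1.PosDef) (hS1sq : S1 * S1 = A₁)
    (hN : N.PosDef) (hNsq : N * N = S1 * A₂ * S1) :
    ∀ t : ℝ,
      (t • (S1⁻¹ * (S1 * N * S1⁻¹)) + (1 - t) • S1)ᵀ
        * (t • (S1⁻¹ * (S1 * N * S1⁻¹)) + (1 - t) • S1)
      = (1 - t)^2 • A₁
        + (t * (1 - t)) • ((S1 * N * S1⁻¹) + (S1 * N * S1⁻¹)ᵀ)
        + t^2 • A₂ := by
  intro t
  have hdet : IsUnit S1.det := isUnit_iff_ne_zero.mpr hS1.det_pos.ne'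
  have hS1t : S1ᵀ = S1 := by
    have := hS1.isHermitian
    simpa [Matrix.IsHermitian] using this
  have hNt : Nᵀ = N := by
    have := hN.isHermitian
    simpa [Matrix.IsHermitian] using this
  have hinv : S1⁻¹ * S1 = 1 := Matrix.nonsing_inv_mul _ hdet
  have hinv' : S1 * S1⁻¹ = 1 := Matrix.mul_nonsing_inv _ hdet
  have hinvt : (S1⁻¹)ᵀ = S1⁻¹ := by rw [Matrix.transpose_nonsing_inv, hS1t]
  have h1 : S1⁻¹ * (S1 * N * S1⁻¹) = N * S1⁻¹ := by
    rw [mul_assoc S1 N, ← mul_assoc S1⁻¹, hinv, one_mul]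
  have h2 : (N * S1⁻¹)ᵀ = S1⁻¹ * N := by rw [Matrix.transpose_mul, hinvt, hNt]
  have h3 : (S1 * N * S1⁻¹)ᵀ = S1⁻¹ * N * S1 := by
    rw [Matrix.transpose_mul, Matrix.transpose_mul, hinvt, hNt, hS1t, mul_assoc]
  have hmid : S1⁻¹ * N * (N * S1⁻¹) = A₂ := by
    have : S1⁻¹ * N * (N * S1⁻¹) = S1⁻¹ * (N * N) * S1⁻¹ := by noncomm_ring
    rw [this, hNsq]
    calc S1⁻¹ * (S1 * A₂ * S1) * S1⁻¹
        = (S1⁻¹ * S1) * A₂ * (S1 * S1⁻¹) := by noncomm_ring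
      _ = A₂ := by rw [hinv, hinv', one_mul, mul_one]
  rw [h1, h3, Matrix.transpose_add, Matrix.transpose_smul, Matrix.transpose_smul, h2, hS1t]
  have hexp :
      (t • (S1⁻¹ * N) + (1 - t) • S1) * (t • (N * S1⁻¹) + (1 - t) • S1)
        = (t * t) • (S1⁻¹ * N * (N * S1⁻¹)) + (t * (1 - t)) • (S1⁻¹ * N * S1)
          + ((1 - t) * t) • (S1 * (N * S1⁻¹)) + ((1 - t) * (1 - t)) • (S1 * S1) := by
    simp only [Matrix.add_mul, Matrix.mul_add, Matrix.smul_mul, Matrix.mul_smul,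
      smul_smul, mul_assoc]
    module
  rw [hexp, hmid, hS1sq]
  have h4 : S1 * (N * S1⁻¹) = S1 * N * S1⁻¹ := by rw [mul_assoc]
  rw [h4]
  module
end

section
/- Let A be symmetric positive definite and X symmetric with g_W-norm small enough that exp_A(X) := A + X + Γ_A[X]·A·Γ_A[X] is positive definite. Then the Wasserstein logarithm of exp_A(X) at A recovers X: (A·exp_A(X))^{1/2} + (exp_A(X)·A)^{1/2} − 2A = X, provided I + Γ_A[X] is positive definite. -/
open Matrix

/-!
Since `A·Γ + Γ·A = X`, the point `exp_A(X)` factors as `(I + Γ)·A·(I + Γ)`. With `S = A^{1/2}`,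
`S·(I + Γ)·S` is positive semidefinite and squares to `S·exp_A(X)·S`, so by uniqueness of
positive square roots it is `N`. Hence `(A·exp_A(X))^{1/2} = S·N·S⁻¹ = A·(I + Γ)`, its transpose
is `(I + Γ)·A`, and the sum minus `2A` is `A·Γ + Γ·A = X`.
-/

theorem one_add_mul_mul_one_add {R : Type*} [Ring R] (a g : R) :
    (1 + g) * a * (1 + g) = a + (a * g + g * a) + g * a * g := by
  noncomm_ring

open scoped ComplexOrder

namespace Matrix

variable {𝕜 n : Type*} [RCLike 𝕜] [Fintype n] [DecidableEq n]

theorem PosSemidef.eq_of_mul_self_eq {N M : Matrix n n 𝕜} (hN : N.PosSemidef)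
    (hM : M.PosSemidef) (h : N * N = M * M) : N = M := by
  open scoped MatrixOrder Matrix.Norms.L2Operator in
  exact (CFC.sq_eq_sq_iff N M hN.nonneg hM.nonneg).mp (by rw [sq, sq, h])

theorem PosDef.mul_sqrt_conj_mul_inv_eq {S B N : Matrix n n 𝕜} (hS : S.PosDef)
    (hB : B.PosSemidef) (hN : N.PosSemidef) (hNsq : N * N = S * (B * (S * S) * B) * S) :
    S * N * S⁻¹ = S * S * B := by
  have hSherm : Sᴴ = S := hS.isHermitian
  have hSBS : (S * B * S).PosSemidef := by
    simpa [hSherm] using hB.conjTranspose_mul_mul_same S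
  have hN_eq : N = S * B * S :=
    hN.eq_of_mul_self_eq hSBS (by rw [hNsq]; noncomm_ring)
  have hSinv : S * S⁻¹ = 1 := mul_nonsing_inv S ((isUnit_iff_isUnit_det S).mp hS.isUnit)
  calc S * N * S⁻¹ = S * S * B * (S * S⁻¹) := by rw [hN_eq]; noncomm_ring
    _ = S * S * B := by rw [hSinv, mul_one]

end Matrix

theorem wasserstein_log_exp_general {n : ℕ} (A X G SA N : Matrix (Fin n) (Fin n) ℝ)
    (hA : A.PosDef)
    (hG : A * G + G * A = X) (hGsym : Gᵀ = G)
    (hIG : (1 + G).PosDef)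
    (hSA : SA.PosDef) (hSAsq : SA * SA = A)
    (hN : N.PosDef) (hNsq : N * N = SA * (A + X + G * A * G) * SA) :
    (SA * N * SA⁻¹) + (SA * N * SA⁻¹)ᵀ - 2 • A = X := by
  have hE : A + X + G * A * G = (1 + G) * (SA * SA) * (1 + G) := by
    rw [hSAsq, one_add_mul_mul_one_add, hG]
  have hsqrt : SA * N * SA⁻¹ = A * (1 + G) := by
    rw [hE] at hNsq
    rw [hSA.mul_sqrt_conj_mul_inv_eq hIG.posSemidef hN.posSemidef hNsq, hSAsq]
  have hAsym : Aᵀ = A := hA.isHermitian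
  rw [hsqrt, transpose_mul, transpose_add, transpose_one, hGsym, hAsym, ← hG]
  noncomm_ring

/-- Wasserstein log ∘ exp = id: if `E = exp_A(X) = A + X + Γ_A[X]·A·Γ_A[X]` is SPD and
`I + Γ_A[X]` is SPD, then `(A·E)^{1/2} + (E·A)^{1/2} − 2A = X`. Here `G = Γ_A[X]` is the
(symmetric) Sylvester solution, `SA` is the positive definite square root of `A`, `N`
that of `SA·E·SA`, `(A·E)^{1/2} = SA·N·SA⁻¹` and `(E·A)^{1/2} = ((A·E)^{1/2})ᵀ`. -/
theorem wasserstein_log_exp {n : ℕ} (A X G SA N : Matrix (Fin n) (Fin n) ℝ)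
    (hA : A.PosDef) (hX : Xᵀ = X)
    (hG : A * G + G * A = X) (hGsym : Gᵀ = G)
    (hIG : (1 + G).PosDef)
    (hE : (A + X + G * A * G).PosDef)
    (hSA : SA.PosDef) (hSAsq : SA * SA = A)
    (hN : N.PosDef) (hNsq : N * N = SA * (A + X + G * A * G) * SA) :
    (SA * N * SA⁻¹) + (SA * N * SA⁻¹)ᵀ - 2 • A = X :=
  wasserstein_log_exp_general A X G SA N hA hG hGsym hIG hSA hSAsq hN hNsq
end

section
/- The manifold of symmetric positive definite matrices with the Wasserstein metric is metrically incomplete: there exists a geodesic defined on a maximal finite interval that cannot be extended (equivalently, exp_A(tX) leaves SPD(n) in finite time whenever Γ_A[X] has a negative eigenvalue). -/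
open Matrix

lemma smul_one_posDef_iff {n : ℕ} (hn : 0 < n) (c : ℝ) :
    ((c • (1 : Matrix (Fin n) (Fin n) ℝ))).PosDef ↔ 0 < c := by
  rw [Matrix.smul_one_eq_diagonal, Matrix.posDef_diagonal_iff]
  exact ⟨fun h => h ⟨0, hn⟩, fun h _ => h⟩

/-- Incompleteness of the Wasserstein metric: there is a geodesic
`γ(s) = A + sX + s²·Γ_A[X]·A·Γ_A[X]` defined on a maximal finite interval `[0, ε)`
which cannot be extended: it stays SPD on `[0, ε)` but leaves SPD(n) at `s = ε`. -/
theorem wasserstein_incomplete {n : ℕ} (hn : 0 < n) :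
    ∃ A X G : Matrix (Fin n) (Fin n) ℝ,
      A.PosDef ∧ Xᵀ = X ∧ A * G + G * A = X ∧
      ∃ ε : ℝ, 0 < ε ∧
        (∀ s : ℝ, 0 ≤ s → s < ε → (A + s • X + s ^ 2 • (G * A * G)).PosDef) ∧
        ¬ (A + ε • X + ε ^ 2 • (G * A * G)).PosDef := by
  refine ⟨1, (-1 : ℝ) • 1, (-(1/2) : ℝ) • 1, ?_, ?_, ?_, 2, by norm_num, ?_, ?_⟩
  · have := (smul_one_posDef_iff hn 1).2 one_pos
    simpa using this
  · simp [Matrix.transpose_smul]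
  · simp [Matrix.smul_mul, Matrix.mul_smul]
    module
  · intro s hs0 hs2
    have key : (1 : Matrix (Fin n) (Fin n) ℝ) + s • ((-1 : ℝ) • 1)
        + s ^ 2 • (((-(1/2) : ℝ) • 1) * 1 * ((-(1/2) : ℝ) • 1))
        = (1 - s + s ^ 2 / 4) • 1 := by
      simp [Matrix.smul_mul, Matrix.mul_smul, smul_smul]
      module
    rw [key, smul_one_posDef_iff hn]
    nlinarith
  · have key : (1 : Matrix (Fin n) (Fin n) ℝ) + (2:ℝ) • ((-1 : ℝ) • 1)
        + (2:ℝ) ^ 2 • (((-(1/2) : ℝ) • 1) * 1 * ((-(1/2) : ℝ) • 1))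
        = (0 : ℝ) • 1 := by
      simp [Matrix.smul_mul, Matrix.mul_smul, smul_smul]
      module
    rw [key, smul_one_posDef_iff hn]
    norm_num
end

section
/- Along the Wasserstein geodesic γ(t) = exp_A(tX), the vector field J(t) = tY + t²(Γ_A[X]·A·Γ_A[Y] + Γ_A[Y]·A·Γ_A[X]) never vanishes for t > 0 in the domain of the geodesic, whenever Y ≠ 0: there is no p > 0 with γ(p) defined (i.e., I + pΓ_A[X] positive definite) and J(p) = 0. Consequently there are no conjugate points. -/
/-!
Since `p > 0`, `J(p) = 0` says `M A Γ + Γ A M = 0` with `M = I + p Γ_A[X]` positive definite and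
`Γ = Γ_A[Y]`. Conjugating by `N = A^{1/2}` turns this into `P T + T P = 0` with `P = N M N`
positive definite and `T = N Γ N`. Then `tr (Tᴴ P T) + tr (T P Tᴴ) = tr (Tᴴ (P T + T P)) = 0` is a
sum of two nonnegative traces, so `Tᴴ P T = 0`, whence `T = 0`, `Γ_A[Y] = 0` and `Y = 0`.
-/

open Matrix
open scoped MatrixOrder ComplexOrder

namespace Matrix

variable {𝕜 n : Type*} [RCLike 𝕜] [Fintype n]

theorem PosDef.eq_zero_of_conjTranspose_mul_mul_eq_zero {P T : Matrix n n 𝕜} (hP : P.PosDef)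
    (h : Tᴴ * P * T = 0) : T = 0 := by
  classical
  refine ext_of_mulVec_single fun j => ?_
  rw [zero_mulVec]
  by_contra hne
  have hpos := hP.dotProduct_mulVec_pos hne
  simp only [star_mulVec, dotProduct_mulVec, vecMul_vecMul, h, vecMul_zero,
    zero_dotProduct] at hpos
  exact lt_irrefl 0 hpos

theorem PosDef.eq_zero_of_mul_add_mul_eq_zero_s17 {P T : Matrix n n 𝕜} (hP : P.PosDef)
    (h : P * T + T * P = 0) : T = 0 := by
  have hleft := hP.posSemidef.conjTranspose_mul_mul_same T
  have hright := hP.posSemidef.mul_mul_conjTranspose_same T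
  have htrace : (Tᴴ * P * T).trace + (T * P * Tᴴ).trace = 0 := by
    rw [trace_mul_cycle T, ← trace_add, Matrix.mul_assoc, Matrix.mul_assoc, ← Matrix.mul_add, h,
      Matrix.mul_zero, trace_zero]
  have hzero := ((add_eq_zero_iff_of_nonneg hleft.trace_nonneg hright.trace_nonneg).1 htrace).1
  exact hP.eq_zero_of_conjTranspose_mul_mul_eq_zero (hleft.trace_eq_zero_iff.1 hzero)

theorem PosDef.eq_zero_of_mul_mul_add_mul_mul_eq_zero [DecidableEq n] {A M G : Matrix n n 𝕜}
    (hA : A.PosDef) (hM : M.PosDef) (h : M * A * G + G * A * M = 0) : G = 0 := by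
  set N := CFC.sqrt A
  have hN : N.PosDef := hA.isStrictlyPositive.sqrt.posDef
  have hNN : N * N = A := CFC.sqrt_mul_sqrt_self A hA.posSemidef.nonneg
  have hP : (N * M * N).PosDef := by
    simpa only [hN.1.eq] using
      hM.conjTranspose_mul_mul_same (mulVec_injective_iff_isUnit.2 hN.isUnit)
  have hT : N * (G * N) = 0 := by
    rw [← Matrix.mul_assoc]
    refine hP.eq_zero_of_mul_add_mul_eq_zero_s17 ?_
    calc N * M * N * (N * G * N) + N * G * N * (N * M * N)
        = N * (M * A * G + G * A * M) * N := by
          simp only [← hNN, Matrix.mul_add, Matrix.add_mul, Matrix.mul_assoc]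
      _ = 0 := by rw [h, Matrix.mul_zero, Matrix.zero_mul]
  exact hN.isUnit.mul_left_eq_zero.1 (hN.isUnit.mul_right_eq_zero.1 hT)

end Matrix

theorem no_conjugate_points_general {n : ℕ} (A Y GX GY : Matrix (Fin n) (Fin n) ℝ)
    (hA : A.PosDef) (hY0 : Y ≠ 0)
    (hGY : A * GY + GY * A = Y) :
    ¬ ∃ p : ℝ, 0 < p ∧ (1 + p • GX).PosDef ∧
        p • Y + p ^ 2 • (GX * A * GY + GY * A * GX) = 0 := by
  rintro ⟨p, hp, hM, hJ⟩
  have hJacobi : (1 + p • GX) * A * GY + GY * A * (1 + p • GX) = 0 := by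
    calc (1 + p • GX) * A * GY + GY * A * (1 + p • GX)
        = p⁻¹ • (p • Y + p ^ 2 • (GX * A * GY + GY * A * GX)) := by
          rw [← hGY, smul_add, smul_smul, smul_smul, inv_mul_cancel₀ hp.ne', one_smul,
            sq, ← mul_assoc, inv_mul_cancel₀ hp.ne', one_mul]
          simp only [Matrix.add_mul, Matrix.mul_add, Matrix.one_mul, Matrix.mul_one,
            smul_mul_assoc, mul_smul_comm, smul_add, Matrix.mul_assoc]
          abel
      _ = 0 := by rw [hJ, smul_zero]
  have hGY0 : GY = 0 := hA.eq_zero_of_mul_mul_add_mul_mul_eq_zero hM hJacobi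
  exact hY0 (by rw [← hGY, hGY0, Matrix.mul_zero, Matrix.zero_mul, add_zero])

/-- No conjugate points: along the Wasserstein geodesic `γ(t) = exp_A(tX)`, the Jacobi
field `J(t) = tY + t²(Γ_A[X]·A·Γ_A[Y] + Γ_A[Y]·A·Γ_A[X])` with `J(0) = 0` and
initial derivative `Y ≠ 0` never vanishes at a `p > 0` where the geodesic is defined. -/
theorem no_conjugate_points {n : ℕ} (A X Y GX GY : Matrix (Fin n) (Fin n) ℝ)
    (hA : A.PosDef) (hX : Xᵀ = X) (hY : Yᵀ = Y) (hY0 : Y ≠ 0)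
    (hGX : A * GX + GX * A = X) (hGXs : GXᵀ = GX)
    (hGY : A * GY + GY * A = Y) :
    ¬ ∃ p : ℝ, 0 < p ∧ (1 + p • GX).PosDef ∧
        p • Y + p ^ 2 • (GX * A * GY + GY * A * GX) = 0 :=
  no_conjugate_points_general A Y GX GY hA hY0 hGY
end

section
/- For symmetric positive definite A₁, A₂, the maximum of tr(P·A₁^{1/2}·A₂^{1/2}) over orthogonal matrices P equals tr((A₁A₂)^{1/2}), i.e., tr of the square root with positive eigenvalues of A₁A₂. Consequently, the minimum of ‖P₁A₁^{1/2} − P₂A₂^{1/2}‖_F over orthogonal P₁, P₂ equals (tr(A₁) + tr(A₂) − 2tr((A₁A₂)^{1/2}))^{1/2}. -/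
/-!
Write `X = A₁^{1/2} A₂^{1/2}`. Since `N² = X Xᵀ`, the polar decomposition is `X = N U` with
`U = N⁻¹ X` orthogonal, so `tr (P X) = tr ((U P) N)`. For `N ⪰ 0` and `Q` orthogonal,
`tr (Q N) ≤ tr N` by completing the square, with equality at `Q = 1`, i.e. at `P = Uᵀ`.
Expanding the Frobenius norm gives
`‖P₁ A₁^{1/2} − P₂ A₂^{1/2}‖² = tr A₁ + tr A₂ − 2 tr (P₂ᵀ P₁ X)`,
so the minimum distance corresponds to the maximum trace, and `tr (A₁^{1/2} N A₁^{-1/2}) = tr N`.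
-/

open Matrix

namespace Matrix

variable {ι : Type*} [Fintype ι]

lemma transpose_mul_self_eq_one_mul {R : Type*} [CommSemiring R] [DecidableEq ι]
    {P Q : Matrix ι ι R} (hP : Pᵀ * P = 1) (hQ : Qᵀ * Q = 1) : (P * Q)ᵀ * (P * Q) = 1 := by
  rw [transpose_mul, Matrix.mul_assoc, ← Matrix.mul_assoc Pᵀ, hP, Matrix.one_mul, hQ]

lemma trace_transpose_mul_self_sub (X Y : Matrix ι ι ℝ) :
    ((X - Y)ᵀ * (X - Y)).trace = (Xᵀ * X).trace + (Yᵀ * Y).trace - 2 * (Yᵀ * X).trace := by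
  have hXY : (Xᵀ * Y).trace = (Yᵀ * X).trace := by
    rw [← trace_transpose, transpose_mul, transpose_transpose]
  simp only [transpose_sub, sub_mul, mul_sub, trace_sub, hXY]
  ring

lemma trace_transpose_mul_self_nonneg (X : Matrix ι ι ℝ) : 0 ≤ (Xᵀ * X).trace := by
  simpa only [conjTranspose_eq_transpose_of_trivial] using
    (posSemidef_conjTranspose_mul_self X).trace_nonneg

open scoped MatrixOrder in
lemma PosSemidef.exists_eq_transpose_mul_self [DecidableEq ι] {M : Matrix ι ι ℝ}
    (hM : M.PosSemidef) : ∃ R : Matrix ι ι ℝ, M = Rᵀ * R := by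
  refine ⟨CFC.sqrt M, ?_⟩
  rw [(isHermitian_iff_isSymm.mp (CFC.sqrt_nonneg M).posSemidef.isHermitian).eq,
    CFC.sqrt_mul_sqrt_self M hM.nonneg]

/-- Writing `M = Rᵀ R`, the gap `2 (tr M - tr (Q M))` is `‖R - R Qᵀ‖_F²`. -/
lemma trace_mul_le_trace_of_posSemidef [DecidableEq ι] {Q M : Matrix ι ι ℝ}
    (hQ : Qᵀ * Q = 1) (hM : M.PosSemidef) : (Q * M).trace ≤ M.trace := by
  obtain ⟨R, rfl⟩ := hM.exists_eq_transpose_mul_self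
  have hsq := trace_transpose_mul_self_sub R (R * Qᵀ)
  have hconj : ((R * Qᵀ)ᵀ * (R * Qᵀ)).trace = (Rᵀ * R).trace := by
    rw [transpose_mul, transpose_transpose, Matrix.mul_assoc, trace_mul_comm,
      Matrix.mul_assoc, Matrix.mul_assoc R, hQ, Matrix.mul_one]
  rw [hconj, transpose_mul, transpose_transpose, Matrix.mul_assoc] at hsq
  linarith [trace_transpose_mul_self_nonneg (R - R * Qᵀ)]

lemma isGreatest_trace_orthogonal_mul [DecidableEq ι] {X N : Matrix ι ι ℝ} (hN : N.PosDef)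
    (hNX : N * N = X * Xᵀ) :
    IsGreatest {c : ℝ | ∃ P : Matrix ι ι ℝ, Pᵀ * P = 1 ∧ c = (P * X).trace} N.trace := by
  have hNt : Nᵀ = N := (isHermitian_iff_isSymm.mp hN.isHermitian).eq
  have hNdet : IsUnit N.det := (isUnit_iff_isUnit_det N).mp hN.isUnit
  set U := N⁻¹ * X
  have hNU : N * U = X := by rw [← Matrix.mul_assoc, mul_nonsing_inv N hNdet, Matrix.one_mul]
  have hUUt : U * Uᵀ = 1 := by
    rw [transpose_mul, transpose_nonsing_inv, hNt, Matrix.mul_assoc, ← Matrix.mul_assoc X,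
      ← hNX, ← Matrix.mul_assoc, ← Matrix.mul_assoc, nonsing_inv_mul N hNdet, Matrix.one_mul,
      mul_nonsing_inv N hNdet]
  refine ⟨⟨Uᵀ, by rw [transpose_transpose, hUUt], ?_⟩, ?_⟩
  · rw [← hNU, trace_mul_comm, Matrix.mul_assoc, hUUt, Matrix.mul_one]
  · rintro c ⟨P, hP, rfl⟩
    rw [← hNU, ← Matrix.mul_assoc, trace_mul_comm, ← Matrix.mul_assoc]
    exact trace_mul_le_trace_of_posSemidef
      (transpose_mul_self_eq_one_mul (mul_eq_one_comm.mp hUUt) hP) hN.posSemidef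

lemma trace_transpose_mul_self_orthogonal_mul_sub [DecidableEq ι] {P₁ P₂ S₁ S₂ : Matrix ι ι ℝ}
    (hP₁ : P₁ᵀ * P₁ = 1) (hP₂ : P₂ᵀ * P₂ = 1) (hS₁ : S₁ᵀ = S₁) (hS₂ : S₂ᵀ = S₂) :
    ((P₁ * S₁ - P₂ * S₂)ᵀ * (P₁ * S₁ - P₂ * S₂)).trace =
      (S₁ * S₁).trace + (S₂ * S₂).trace - 2 * (P₂ᵀ * P₁ * (S₁ * S₂)).trace := by
  have hself {P S : Matrix ι ι ℝ} (hP : Pᵀ * P = 1) (hS : Sᵀ = S) :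
      (P * S)ᵀ * (P * S) = S * S := by
    rw [transpose_mul, hS, Matrix.mul_assoc, ← Matrix.mul_assoc Pᵀ, hP, Matrix.one_mul]
  rw [trace_transpose_mul_self_sub, hself hP₁ hS₁, hself hP₂ hS₂, transpose_mul, hS₂,
    Matrix.mul_assoc, trace_mul_comm S₂ (P₂ᵀ * (P₁ * S₁))]
  simp only [Matrix.mul_assoc]

end Matrix

theorem bures_wasserstein_trace_general {n : ℕ} (A₁ A₂ S1 S2 N : Matrix (Fin n) (Fin n) ℝ)
    (hS1 : S1.PosDef) (hS1sq : S1 * S1 = A₁)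
    (hS2 : S2.PosDef) (hS2sq : S2 * S2 = A₂)
    (hN : N.PosDef) (hNsq : N * N = S1 * A₂ * S1) :
    IsGreatest {c : ℝ | ∃ P : Matrix (Fin n) (Fin n) ℝ,
        Pᵀ * P = 1 ∧ c = (P * S1 * S2).trace} (S1 * N * S1⁻¹).trace ∧
    IsLeast {d : ℝ | ∃ P₁ P₂ : Matrix (Fin n) (Fin n) ℝ,
        P₁ᵀ * P₁ = 1 ∧ P₂ᵀ * P₂ = 1 ∧
        d = Real.sqrt (((P₁ * S1 - P₂ * S2)ᵀ * (P₁ * S1 - P₂ * S2)).trace)}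
      (Real.sqrt (A₁.trace + A₂.trace - 2 * (S1 * N * S1⁻¹).trace)) := by
  have hS1t : S1ᵀ = S1 := (isHermitian_iff_isSymm.mp hS1.isHermitian).eq
  have hS2t : S2ᵀ = S2 := (isHermitian_iff_isSymm.mp hS2.isHermitian).eq
  have htrace : (S1 * N * S1⁻¹).trace = N.trace := by
    rw [trace_mul_cycle, nonsing_inv_mul S1 ((isUnit_iff_isUnit_det S1).mp hS1.isUnit),
      Matrix.one_mul]
  have hNX : N * N = (S1 * S2) * (S1 * S2)ᵀ := by
    rw [hNsq, ← hS2sq, transpose_mul, hS1t, hS2t]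
    simp only [Matrix.mul_assoc]
  have hmax := isGreatest_trace_orthogonal_mul hN hNX
  simp only [← Matrix.mul_assoc] at hmax
  rw [htrace]
  refine ⟨hmax, ?_, ?_⟩
  · obtain ⟨P, hP, hPN⟩ := hmax.1
    refine ⟨P, 1, hP, by simp, ?_⟩
    rw [trace_transpose_mul_self_orthogonal_mul_sub hP (by simp) hS1t hS2t, hS1sq, hS2sq, hPN,
      transpose_one, Matrix.one_mul, Matrix.mul_assoc]
  · rintro d ⟨P₁, P₂, hP₁, hP₂, rfl⟩
    rw [trace_transpose_mul_self_orthogonal_mul_sub hP₁ hP₂ hS1t hS2t, hS1sq, hS2sq]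
    have hle := hmax.2 ⟨P₂ᵀ * P₁,
      transpose_mul_self_eq_one_mul (by rw [transpose_transpose, mul_eq_one_comm.mp hP₂]) hP₁, rfl⟩
    gcongr
    simpa only [Matrix.mul_assoc] using hle

/-- Bures–Wasserstein distance: `max { tr(P·A₁^{1/2}·A₂^{1/2}) : P orthogonal }
= tr((A₁A₂)^{1/2})`, and consequently
`min { ‖P₁A₁^{1/2} − P₂A₂^{1/2}‖_F : P₁, P₂ orthogonal }
= (tr A₁ + tr A₂ − 2 tr((A₁A₂)^{1/2}))^{1/2}`.
Here `S1, S2` are the positive definite square roots of `A₁, A₂`, `N` that of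
`S1·A₂·S1`, so `(A₁A₂)^{1/2} = S1·N·S1⁻¹` and `tr((A₁A₂)^{1/2}) = tr N`. -/
theorem bures_wasserstein_trace {n : ℕ} (A₁ A₂ S1 S2 N : Matrix (Fin n) (Fin n) ℝ)
    (hA₁ : A₁.PosDef) (hA₂ : A₂.PosDef)
    (hS1 : S1.PosDef) (hS1sq : S1 * S1 = A₁)
    (hS2 : S2.PosDef) (hS2sq : S2 * S2 = A₂)
    (hN : N.PosDef) (hNsq : N * N = S1 * A₂ * S1) :
    IsGreatest {c : ℝ | ∃ P : Matrix (Fin n) (Fin n) ℝ,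
        Pᵀ * P = 1 ∧ c = (P * S1 * S2).trace} (S1 * N * S1⁻¹).trace ∧
    IsLeast {d : ℝ | ∃ P₁ P₂ : Matrix (Fin n) (Fin n) ℝ,
        P₁ᵀ * P₁ = 1 ∧ P₂ᵀ * P₂ = 1 ∧
        d = Real.sqrt (((P₁ * S1 - P₂ * S2)ᵀ * (P₁ * S1 - P₂ * S2)).trace)}
      (Real.sqrt (A₁.trace + A₂.trace - 2 * (S1 * N * S1⁻¹).trace)) :=
  bures_wasserstein_trace_general A₁ A₂ S1 S2 N hS1 hS1sq hS2 hS2sq hN hNsq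
end

section
/- For a sorted positive diagonal matrix Λ = diag(λ₁,…,λₙ) and basis elements S^{p,q} (the symmetric matrix with 1's in positions (p,q) and (q,p)) with p ≠ q = r and p ≠ t, the Wasserstein sectional curvature of the plane spanned by S^{p,q} and S^{r,t} equals 3(1+δ_{rt})·λ_p·λ_t / [(λ_p+λ_r)(λ_r+λ_t)(λ_p+λ_t)]; in particular every such sectional curvature is nonnegative and strictly less than 3/(λ_p+λ_t) ≤ 3/λ_min(Λ). -/
open Matrix

/-- Entrywise Sylvester solution at a positive diagonal matrix `Λ = diag lam`:
`(Γ_Λ[X]) i j = X i j / (lam i + lam j)`. -/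
noncomputable def gammaDiag {n : ℕ} (lam : Fin n → ℝ) (X : Matrix (Fin n) (Fin n) ℝ) :
    Matrix (Fin n) (Fin n) ℝ :=
  Matrix.of fun i j => X i j / (lam i + lam j)

/-- The symmetric basis matrix `S^{p,q}` with `1`s in positions `(p,q)` and `(q,p)`. -/
def symBasis {n : ℕ} (p q : Fin n) : Matrix (Fin n) (Fin n) ℝ :=
  Matrix.of fun i j =>
    (if i = p ∧ j = q then (1 : ℝ) else 0) + (if i = q ∧ j = p then (1 : ℝ) else 0)

/-- The Wasserstein sectional curvature at `Λ = diag lam` of the plane spanned by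
symmetric `X`, `Y`: `K = R(X,Y,X,Y)/(⟨X,X⟩⟨Y,Y⟩ − ⟨X,Y⟩²)` with
`R(X,Y,X,Y) = 3·tr(Γ_Λ[X]·Λ·Γ_Λ[Γ_Λ[X]Γ_Λ[Y] − Γ_Λ[Y]Γ_Λ[X]]·Λ·Γ_Λ[Y])` and
`⟨X,Y⟩ = (1/2)tr(Γ_Λ[X]·Y)`. -/
noncomputable def sectCurv {n : ℕ} (lam : Fin n → ℝ)
    (X Y : Matrix (Fin n) (Fin n) ℝ) : ℝ :=
  (3 * (gammaDiag lam X * Matrix.diagonal lam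
      * gammaDiag lam (gammaDiag lam X * gammaDiag lam Y
          - gammaDiag lam Y * gammaDiag lam X)
      * Matrix.diagonal lam * gammaDiag lam Y).trace)
  / ((1/2) * (gammaDiag lam X * X).trace * ((1/2) * (gammaDiag lam Y * Y).trace)
      - ((1/2) * (gammaDiag lam X * Y).trace) ^ 2)

/-!
`Γ_Λ` acts entrywise, so it scales the matrix unit `E_ij` by `1/(λᵢ+λⱼ)`, and multiplying by
`Λ` on the right scales it by `λⱼ`. Writing `S^{p,q} = E_pq + E_qp`, every trace in the
curvature becomes a trace of products of matrix units: the two directions are orthogonal,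
`⟨S^{p,q},S^{p,q}⟩ = 1/(λ_p+λ_q)`, `⟨S^{q,t},S^{q,t}⟩ = (1+δ_{qt})/(λ_q+λ_t)`, and only the
path `q → p → t → q` contributes to `R`. The bound `K < 3/(λ_p+λ_t)` then amounts to
`(1+δ_{qt}) λ_p λ_t < (λ_p+λ_q)(λ_q+λ_t)`.
-/

theorem Matrix.single_mul_diagonal {m α : Type*} [Fintype m] [DecidableEq m]
    [NonUnitalNonAssocSemiring α] (d : m → α) (i j : m) (c : α) :
    single i j c * diagonal d = single i j (c * d j) := by
  ext a b
  rw [mul_diagonal, single_apply, single_apply]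
  split_ifs with h
  · rw [h.2]
  · rw [zero_mul]

section Wasserstein

variable {n : ℕ} (lam : Fin n → ℝ)

theorem gammaDiag_add (X Y : Matrix (Fin n) (Fin n) ℝ) :
    gammaDiag lam (X + Y) = gammaDiag lam X + gammaDiag lam Y := by
  ext i j
  simp [gammaDiag, add_div]

theorem gammaDiag_sub (X Y : Matrix (Fin n) (Fin n) ℝ) :
    gammaDiag lam (X - Y) = gammaDiag lam X - gammaDiag lam Y := by
  ext i j
  simp [gammaDiag, sub_div]

theorem gammaDiag_single (i j : Fin n) (c : ℝ) :
    gammaDiag lam (single i j c) = single i j (c / (lam i + lam j)) := by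
  ext a b
  rw [gammaDiag, of_apply, single_apply, single_apply]
  split_ifs with h
  · rw [h.1, h.2]
  · rw [zero_div]

theorem symBasis_eq_single_add_single (p q : Fin n) :
    symBasis p q = single p q 1 + single q p 1 := by
  ext a b
  simp only [symBasis, of_apply, Matrix.add_apply, single_apply, eq_comm]

noncomputable def wassersteinInner (X Y : Matrix (Fin n) (Fin n) ℝ) : ℝ :=
  (1 / 2) * (gammaDiag lam X * Y).trace

noncomputable def wassersteinRiemann (X Y : Matrix (Fin n) (Fin n) ℝ) : ℝ :=
  3 * (gammaDiag lam X * diagonal lam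
      * gammaDiag lam (gammaDiag lam X * gammaDiag lam Y - gammaDiag lam Y * gammaDiag lam X)
      * diagonal lam * gammaDiag lam Y).trace

theorem sectCurv_eq_riemann_div (X Y : Matrix (Fin n) (Fin n) ℝ) :
    sectCurv lam X Y = wassersteinRiemann lam X Y /
      (wassersteinInner lam X X * wassersteinInner lam Y Y - wassersteinInner lam X Y ^ 2) :=
  rfl

theorem wassersteinInner_symBasis_self (p q : Fin n) :
    wassersteinInner lam (symBasis p q) (symBasis p q)
      = (1 + if p = q then 1 else 0) / (lam p + lam q) := by
  rcases eq_or_ne p q with rfl | hpq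
  · simp only [wassersteinInner, symBasis_eq_single_add_single, gammaDiag_add, gammaDiag_single,
      Matrix.add_mul, trace_add, trace_single_mul, Matrix.add_apply, single_apply_same, if_true,
      smul_eq_mul]
    ring
  · simp only [wassersteinInner, symBasis_eq_single_add_single, gammaDiag_add, gammaDiag_single,
      add_comm (lam q), Matrix.add_mul, trace_add, trace_single_mul, Matrix.add_apply, hpq,
      hpq.symm, and_self, not_false_eq_true, single_apply_of_ne, single_apply_same, smul_eq_mul,
      if_false]
    ring

theorem wassersteinInner_symBasis_eq_zero {p q t : Fin n} (hpq : p ≠ q) (hpt : p ≠ t) :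
    wassersteinInner lam (symBasis p q) (symBasis q t) = 0 := by
  simp [wassersteinInner, symBasis_eq_single_add_single, gammaDiag_add, gammaDiag_single,
    Matrix.add_mul, trace_single_mul, hpq.symm, hpt.symm]

variable {lam}

theorem wassersteinRiemann_symBasis (hlam : ∀ i, 0 < lam i) {p q t : Fin n} (hpq : p ≠ q)
    (hpt : p ≠ t) :
    wassersteinRiemann lam (symBasis p q) (symBasis q t)
      = 3 * (1 + if q = t then 1 else 0) ^ 2 * lam p * lam t
        / ((lam p + lam q) ^ 2 * (lam q + lam t) ^ 2 * (lam p + lam t)) := by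
  have := hlam p; have := hlam q; have := hlam t
  rcases eq_or_ne q t with rfl | hqt
  · simp only [wassersteinRiemann, symBasis_eq_single_add_single, gammaDiag_add,
      gammaDiag_single, gammaDiag_sub, Matrix.add_mul, Matrix.mul_add, Matrix.sub_mul,
      Matrix.mul_sub, single_mul_diagonal, single_mul_single_same, single_mul_single_of_ne,
      ne_eq, hpq, hpq.symm, not_false_eq_true, add_zero, zero_add, sub_zero, trace_add,
      trace_single_eq_same, if_true]
    field_simp
    ring
  · simp only [wassersteinRiemann, symBasis_eq_single_add_single, gammaDiag_add,
      gammaDiag_single, gammaDiag_sub, Matrix.add_mul, Matrix.mul_add, Matrix.mul_sub,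
      single_mul_diagonal, single_mul_single_same, single_mul_single_of_ne,
      ne_eq, hpq, hpq.symm, hpt, hpt.symm, hqt, hqt.symm, not_false_eq_true, add_zero, zero_add,
      sub_zero, trace_single_eq_same, if_false]
    field_simp
    ring

theorem sectCurv_symBasis (hlam : ∀ i, 0 < lam i) {p q t : Fin n} (hpq : p ≠ q) (hpt : p ≠ t) :
    sectCurv lam (symBasis p q) (symBasis q t)
      = 3 * (1 + (if q = t then (1 : ℝ) else 0)) * lam p * lam t
        / ((lam p + lam q) * (lam q + lam t) * (lam p + lam t)) := by
  have := hlam p; have := hlam q; have := hlam t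
  rw [sectCurv_eq_riemann_div, wassersteinRiemann_symBasis hlam hpq hpt,
    wassersteinInner_symBasis_self, wassersteinInner_symBasis_self,
    wassersteinInner_symBasis_eq_zero lam hpq hpt, if_neg hpq, add_zero, zero_pow two_ne_zero,
    sub_zero]
  have hδ : 1 + (if q = t then (1 : ℝ) else 0) ≠ 0 := by positivity
  field_simp

theorem symBasis_curvature_lt (hlam : ∀ i, 0 < lam i) (p q t : Fin n) :
    3 * (1 + (if q = t then (1 : ℝ) else 0)) * lam p * lam t
        / ((lam p + lam q) * (lam q + lam t) * (lam p + lam t)) < 3 / (lam p + lam t) := by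
  have hp := hlam p; have hq := hlam q; have ht := hlam t
  rw [div_lt_div_iff₀ (by positivity) (by positivity)]
  rcases eq_or_ne q t with rfl | hqt
  · rw [if_pos rfl]
    nlinarith [mul_pos (mul_pos hp hq) hq, mul_pos (mul_pos hq hq) hq]
  · rw [if_neg hqt]
    nlinarith [mul_pos (mul_pos hp hq) ht, mul_pos (mul_pos hq hq) ht,
      mul_pos (mul_pos hp hq) hq, mul_pos (mul_pos hq hq) hq,
      mul_pos (mul_pos hp ht) ht, mul_pos (mul_pos hq ht) ht]

end Wasserstein

/-- Wasserstein sectional curvatures at a positive diagonal matrix in the basis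
directions: for `p ≠ q = r`, `p ≠ t`,
`K(S^{p,q}, S^{r,t}) = 3(1+δ_{rt})·λ_p·λ_t / [(λ_p+λ_r)(λ_r+λ_t)(λ_p+λ_t)]`;
in particular it is nonnegative and `< 3/(λ_p+λ_t) ≤ 3/λ_min`. -/
theorem sectional_curvature_basis {n : ℕ} (lam : Fin n → ℝ) (hlam : ∀ i, 0 < lam i)
    (p q t : Fin n) (hpq : p ≠ q) (hpt : p ≠ t) :
    sectCurv lam (symBasis p q) (symBasis q t)
        = 3 * (1 + (if q = t then (1 : ℝ) else 0)) * lam p * lam t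
          / ((lam p + lam q) * (lam q + lam t) * (lam p + lam t)) ∧
    0 ≤ sectCurv lam (symBasis p q) (symBasis q t) ∧
    sectCurv lam (symBasis p q) (symBasis q t) < 3 / (lam p + lam t) ∧
    (∀ lmin : ℝ, 0 < lmin → (∀ i, lmin ≤ lam i) →
      3 / (lam p + lam t) ≤ 3 / lmin) := by
  have hval := sectCurv_symBasis hlam hpq hpt
  have := hlam p; have := hlam q; have := hlam t
  refine ⟨hval, ?_, hval ▸ symBasis_curvature_lt hlam p q t, fun lmin hmin hle => ?_⟩
  · rw [hval]
    positivity
  · gcongr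
    linarith [hle p]
end
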